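/- Let G be a finite simple bipartite graph and let G' be obtained from G by adding a single new vertex a together with edges from a to every vertex of G. Then for every k ∈ ℕ, the number of edge-injective homomorphisms from the triangle packing k·K₃ to G' equals 6^k · k! · m_k(G), where m_k(G) is the number of k-matchings of G. -/

import Mathlib

open SimpleGraph

/-- A homomorphism `φ : H →g G` is *edge-injective* if distinct edges of `H`
are mapped to distinct edges of `G`. -/
def EdgeInjective {V W : Type*} {H : SimpleGraph V} {G : SimpleGraph W} (φ : H →g G) : Prop :=
  ∀ e ∈ H.edgeSet, ∀ f ∈ H.edgeSet, Sym2.map φ e = Sym2.map φ f → e = f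

/-- The triangle packing `k·K₃`: the disjoint union of `k` triangles. -/
def trianglePacking (k : ℕ) : SimpleGraph (Fin k × Fin 3) :=
  SimpleGraph.fromRel (fun x y => x.1 = y.1)

/-- Add a single apex vertex (`none`) adjacent to every vertex of `G`. -/
def addApex {V : Type*} (G : SimpleGraph V) : SimpleGraph (Option V) :=
  SimpleGraph.fromRel (fun x y =>
    (x = none ∧ y ≠ none) ∨ (∃ u v, x = some u ∧ y = some v ∧ G.Adj u v))

/-- The number of `k`-matchings of `G` (sets of `k` pairwise disjoint edges of `G`). -/
noncomputable def kMatchingCount {V : Type*} (G : SimpleGraph V) (k : ℕ) : ℕ :=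
  Nat.card {M : Finset (Sym2 V) // M.card = k ∧ ↑M ⊆ G.edgeSet ∧
    ∀ e ∈ M, ∀ f ∈ M, e ≠ f → ∀ x, x ∈ e → x ∉ f}

/-!
A bipartite graph has no triangles, so every triangle of `addApex G` passes through the apex:
a homomorphism of one triangle into `addApex G` is an apex position (3 choices) together with a
dart `(u, v)` of `G`. Edge-injectivity of the whole map says exactly that the spokes from the
apex are distinct, i.e. that the `k` edges `uᵢvᵢ` are pairwise vertex-disjoint. Such ordered,
oriented `k`-matchings number `k! · 2^k · m_k(G)`.
-/

section Adjacency

variable {V : Type*} {G : SimpleGraph V}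

@[simp] lemma addApex_adj_none_some (u : V) : (addApex G).Adj none (some u) := by
  simp [addApex]

@[simp] lemma addApex_adj_some_none (u : V) : (addApex G).Adj (some u) none :=
  (addApex_adj_none_some u).symm

@[simp] lemma addApex_adj_some_some {u v : V} :
    (addApex G).Adj (some u) (some v) ↔ G.Adj u v := by
  simp only [addApex, fromRel_adj, ne_eq, Option.some.injEq, reduceCtorEq, false_and,
    exists_and_left, exists_eq_left', false_or]
  exact ⟨fun ⟨_, h⟩ => h.elim id fun h => h.symm, fun h => ⟨h.ne, .inl h⟩⟩

lemma trianglePacking_adj {k : ℕ} {x y : Fin k × Fin 3} :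
    (trianglePacking k).Adj x y ↔ x.1 = y.1 ∧ x ≠ y := by
  simp only [trianglePacking, fromRel_adj, eq_comm (a := y.1), or_self, and_comm]

end Adjacency

section Triangles

variable {W : Type*} (H : SimpleGraph W) (k : ℕ)

def trianglePackingHomEquiv :
    (Fin k → (⊤ : SimpleGraph (Fin 3)) →g H) ≃ (trianglePacking k →g H) where
  toFun ψ :=
    { toFun x := ψ x.1 x.2
      map_rel' {x y} hxy := by
        rcases x with ⟨i, j⟩
        rcases y with ⟨i', j'⟩
        obtain ⟨rfl : i = i', hne⟩ := trianglePacking_adj.1 hxy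
        exact (ψ i).map_rel (by simpa using hne) }
  invFun φ i :=
    { toFun j := φ (i, j)
      map_rel' hjj' := φ.map_rel (trianglePacking_adj.2 ⟨rfl, by simpa using hjj'⟩) }
  left_inv _ := rfl
  right_inv _ := rfl

variable {H k}

@[simp] lemma trianglePackingHomEquiv_apply (ψ : Fin k → (⊤ : SimpleGraph (Fin 3)) →g H)
    (x : Fin k × Fin 3) : trianglePackingHomEquiv H k ψ x = ψ x.1 x.2 := rfl

lemma edgeInjective_trianglePackingHomEquiv (ψ : Fin k → (⊤ : SimpleGraph (Fin 3)) →g H)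
    (a : W)
    (h : ∀ i i' j j', ψ i j = ψ i' j' → ψ i j ≠ a → i = i') :
    EdgeInjective (trianglePackingHomEquiv H k ψ) := by
  set φ := trianglePackingHomEquiv H k ψ
  have key : ∀ x y x' y', (trianglePacking k).Adj x y → (trianglePacking k).Adj x' y' →
      φ x = φ x' → φ y = φ y' → s(x, y) = s(x', y') := by
    intro x y x' y' hxy hxy' hx hy
    have hxy₁ := (trianglePacking_adj.1 hxy).1
    have hxy'₁ := (trianglePacking_adj.1 hxy').1
    have same_triangle : x.1 = x'.1 := by
      by_cases hxa : φ x = a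
      · have hya : φ y ≠ a := hxa ▸ (H.ne_of_adj (φ.map_rel hxy)).symm
        rw [hxy₁, hxy'₁]
        exact h _ _ _ _ hy hya
      · exact h _ _ _ _ hx hxa
    have inj : ∀ z z' : Fin k × Fin 3, z.1 = z'.1 → φ z = φ z' → z = z' := by
      rintro ⟨i, j⟩ ⟨i', j'⟩ (rfl : i = i') hφ
      obtain rfl : j = j' := (ψ i).injective_of_top_hom hφ
      rfl
    rw [inj x x' same_triangle hx, inj y y' (by rw [← hxy₁, ← hxy'₁, same_triangle]) hy]
  intro e he f hf hef
  induction e using Sym2.ind with | _ x y => ?_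
  induction f using Sym2.ind with | _ x' y' => ?_
  rw [mem_edgeSet] at he hf
  rw [Sym2.map_mk, Sym2.map_mk, Sym2.eq_iff] at hef
  rcases hef with ⟨hx, hy⟩ | ⟨hx, hy⟩
  · exact key x y x' y' he hf hx hy
  · exact (key x y y' x' he hf.symm hx hy).trans Sym2.eq_swap

end Triangles

section ApexTriangles

variable {V : Type*} {G : SimpleGraph V}

def apexTriangle (d : G.Dart) (t : Fin 3) : (⊤ : SimpleGraph (Fin 3)) →g addApex G where
  toFun j := ![none, some d.fst, some d.snd] (j - t)
  map_rel' {j j'} hjj' := by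
    have hne : j - t ≠ j' - t := by simpa using hjj'
    generalize j - t = a, j' - t = b at hne
    fin_cases a <;> fin_cases b <;> simp_all [d.adj, d.adj.symm]

lemma apexTriangle_apply (d : G.Dart) (t j : Fin 3) :
    apexTriangle d t j = ![none, some d.fst, some d.snd] (j - t) := rfl

lemma apexTriangle_apply_eq_none_iff {d : G.Dart} {t j : Fin 3} :
    apexTriangle d t j = none ↔ j = t := by
  rw [apexTriangle_apply, ← sub_eq_zero (a := j)]
  generalize j - t = a
  fin_cases a <;> simp

@[simp] lemma apexTriangle_apply_self (d : G.Dart) (t : Fin 3) : apexTriangle d t t = none :=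
  apexTriangle_apply_eq_none_iff.2 rfl

lemma exists_apexTriangle_apply_eq_some_iff {d : G.Dart} {t : Fin 3} {x : V} :
    (∃ j, apexTriangle d t j = some x) ↔ x ∈ d.edge := by
  simp only [apexTriangle_apply, Dart.edge, Sym2.mem_iff]
  refine ⟨fun ⟨j, hj⟩ => ?_, fun h => ?_⟩
  · generalize j - t = a at hj
    fin_cases a <;> simp_all [eq_comm]
  · rcases h with rfl | rfl
    exacts [⟨1 + t, by simp⟩, ⟨2 + t, by simp⟩]

lemma exists_apply_eq_none (hG : G.CliqueFree 3) (ψ : (⊤ : SimpleGraph (Fin 3)) →g addApex G) :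
    ∃ t, ψ t = none := by
  by_contra! h
  choose w hw using fun j => Option.ne_none_iff_exists'.1 (h j)
  let f : (⊤ : SimpleGraph (Fin 3)) →g G :=
    ⟨w, fun hjj' => by simpa [hw] using ψ.map_rel hjj'⟩
  exact (cliqueFree_iff.1 hG).false (f.toCopy f.injective_of_top_hom)

lemma apexTriangle_injective :
    Function.Injective fun p : G.Dart × Fin 3 => apexTriangle p.1 p.2 := by
  rintro ⟨d, t⟩ ⟨d', t'⟩ h
  simp only at h
  obtain rfl : t = t' := apexTriangle_apply_eq_none_iff.1 (h ▸ apexTriangle_apply_self d t)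
  have hfst := congr($h (1 + t))
  have hsnd := congr($h (2 + t))
  simp only [apexTriangle_apply, add_sub_cancel_right] at hfst hsnd
  simp_all [Dart.ext_iff, Prod.ext_iff]

lemma apexTriangle_surjective (hG : G.CliqueFree 3) :
    Function.Surjective fun p : G.Dart × Fin 3 => apexTriangle p.1 p.2 := by
  intro ψ
  obtain ⟨t, ht⟩ := exists_apply_eq_none hG ψ
  have hne (a : Fin 3) (ha : a ≠ 0) : ψ (a + t) ≠ none := fun h =>
    ha (by simpa using ψ.injective_of_top_hom (h.trans ht.symm))
  obtain ⟨u, hu⟩ := Option.ne_none_iff_exists'.1 (hne 1 (by decide))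
  obtain ⟨v, hv⟩ := Option.ne_none_iff_exists'.1 (hne 2 (by decide))
  have huv : G.Adj u v := by
    simpa [hu, hv] using ψ.map_rel (show (⊤ : SimpleGraph (Fin 3)).Adj (1 + t) (2 + t) by simp)
  refine ⟨(⟨(u, v), huv⟩, t), RelHom.ext fun j => ?_⟩
  obtain ⟨a, rfl⟩ : ∃ a, j = a + t := ⟨j - t, (sub_add_cancel j t).symm⟩
  fin_cases a <;> simp [apexTriangle_apply, ht, hu, hv]

noncomputable def apexTriangleEquiv (hG : G.CliqueFree 3) :
    G.Dart × Fin 3 ≃ ((⊤ : SimpleGraph (Fin 3)) →g addApex G) :=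
  Equiv.ofBijective _ ⟨apexTriangle_injective, apexTriangle_surjective hG⟩

end ApexTriangles

def PairwiseVertexDisjoint {ι V : Type*} (e : ι → Sym2 V) : Prop :=
  Pairwise fun i j => ∀ x ∈ e i, x ∉ e j

section EdgeInjective

variable {V : Type*} {G : SimpleGraph V} {k : ℕ}

lemma edgeInjective_apexTriangles_iff (q : Fin k → G.Dart) (t : Fin k → Fin 3) :
    EdgeInjective (trianglePackingHomEquiv _ k fun i => apexTriangle (q i) (t i)) ↔
      PairwiseVertexDisjoint fun i => (q i).edge := by
  constructor
  · intro hφ i i' hii' x hx hx'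
    obtain ⟨j, hj⟩ := exists_apexTriangle_apply_eq_some_iff.2 hx
    obtain ⟨j', hj'⟩ := exists_apexTriangle_apply_eq_some_iff.2 hx'
    have spoke (i : Fin k) (j : Fin 3) (hj : apexTriangle (q i) (t i) j = some x) :
        s((i, t i), (i, j)) ∈ (trianglePacking k).edgeSet := by
      refine trianglePacking_adj.2 ⟨rfl, fun h => ?_⟩
      simp [apexTriangle_apply_eq_none_iff.2 (congrArg Prod.snd h).symm] at hj
    -- both spokes are mapped onto the edge from the apex to `x`
    have h := hφ _ (spoke i j hj) _ (spoke i' j' hj') (by simp [Sym2.map_mk, hj, hj'])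
    rcases Sym2.eq_iff.1 h with ⟨h, -⟩ | ⟨h, -⟩ <;> exact hii' (congrArg Prod.fst h)
  · intro hdisj
    refine edgeInjective_trianglePackingHomEquiv _ none fun i i' j j' h hne => ?_
    obtain ⟨x, hx⟩ := Option.ne_none_iff_exists'.1 hne
    by_contra hii'
    exact hdisj hii' x (exists_apexTriangle_apply_eq_some_iff.1 ⟨j, hx⟩)
      (exists_apexTriangle_apply_eq_some_iff.1 ⟨j', h ▸ hx⟩)

end EdgeInjective

theorem Nat.card_subtype_pi_of_equiv_prod {ι α β γ : Type*} [Finite ι] (E : α ≃ β × γ)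
    (P : (ι → β) → Prop) :
    Nat.card {q : ι → α // P fun i => (E (q i)).1} =
      Nat.card {e : ι → β // P e} * Nat.card γ ^ Nat.card ι := by
  let F : {q : ι → α // P fun i => (E (q i)).1} ≃ {e : ι → β // P e} × (ι → γ) :=
    (((Equiv.piCongrRight fun _ => E).trans (Equiv.arrowProdEquivProdArrow _ _ _)).subtypeEquiv
      fun _ => Iff.rfl).trans Equiv.prodSubtypeFstEquivSubtypeProd
  rw [Nat.card_congr F, Nat.card_prod, Nat.card_fun]

section Darts

variable {V : Type*} {G : SimpleGraph V}

lemma exists_dart_edge_eq (e : G.edgeSet) : ∃ d : G.Dart, d.edge = e := by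
  obtain ⟨e, he⟩ := e
  induction e using Sym2.ind with | _ u v => exact ⟨⟨(u, v), he⟩, rfl⟩

noncomputable def boolEquivDartEdgeFiber (d₀ : G.Dart) :
    Bool ≃ {d : G.Dart // d.edge = d₀.edge} :=
  Equiv.ofBijective (fun b => bif b then ⟨d₀.symm, d₀.edge_symm⟩ else ⟨d₀, rfl⟩) <| by
    refine ⟨fun b b' h => ?_, fun ⟨d, hd⟩ => ?_⟩
    · cases b <;> cases b' <;> simp_all [Subtype.ext_iff, d₀.symm_ne, d₀.symm_ne.symm]
    · rcases (dart_edge_eq_iff d d₀).1 hd with rfl | rfl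
      exacts [⟨false, rfl⟩, ⟨true, rfl⟩]

variable (G) in
noncomputable def dartEquivEdgeSetProdBool : G.Dart ≃ G.edgeSet × Bool :=
  (Equiv.sigmaFiberEquiv fun d : G.Dart => (⟨d.edge, d.edge_mem⟩ : G.edgeSet)).symm.trans <|
    Equiv.sigmaEquivProdOfEquiv fun e =>
      (Equiv.subtypeEquivRight fun d => by
        rw [(exists_dart_edge_eq e).choose_spec, Subtype.ext_iff]).trans
          (boolEquivDartEdgeFiber (exists_dart_edge_eq e).choose).symm

end Darts

section Matchings

variable {V : Type*} (G : SimpleGraph V) (k : ℕ)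

def kMatchings : Type _ :=
  {M : Finset (Sym2 V) // M.card = k ∧ ↑M ⊆ G.edgeSet ∧
    ∀ e ∈ M, ∀ f ∈ M, e ≠ f → ∀ x, x ∈ e → x ∉ f}

lemma kMatchingCount_eq_card : kMatchingCount G k = Nat.card (kMatchings G k) := rfl

variable {G k}

lemma PairwiseVertexDisjoint.injective {ι : Type*} {e : ι → Sym2 V}
    (h : PairwiseVertexDisjoint e) : Function.Injective e := by
  intro i j hij
  by_contra hne
  exact h hne _ (Sym2.out_fst_mem (e i)) (hij ▸ Sym2.out_fst_mem (e i))

def kMatchings.enumerate (M : kMatchings G k) (σ : Fin k ≃ M.1) :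
    {e : Fin k → G.edgeSet // PairwiseVertexDisjoint fun i => (e i : Sym2 V)} :=
  ⟨fun i => ⟨σ i, M.2.2.1 (σ i).2⟩, fun i j hij =>
    M.2.2.2 _ (σ i).2 _ (σ j).2 fun h => hij (σ.injective (Subtype.ext h))⟩

lemma kMatchings.enumerate_injective :
    Function.Injective fun p : Σ M : kMatchings G k, Fin k ≃ M.1 => p.1.enumerate p.2 := by
  rintro ⟨⟨M, hM⟩, σ⟩ ⟨⟨M', hM'⟩, σ'⟩ h
  have hσ (i : Fin k) : (σ i : Sym2 V) = σ' i := congrArg (fun e => (e.1 i : Sym2 V)) h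
  obtain rfl : M = M' := by
    ext x
    constructor
    · intro hx
      simpa [← hσ] using (σ' (σ.symm ⟨x, hx⟩)).2
    · intro hx
      simpa [hσ] using (σ (σ'.symm ⟨x, hx⟩)).2
  obtain rfl : σ = σ' := Equiv.ext fun i => Subtype.ext (hσ i)
  rfl

lemma kMatchings.enumerate_surjective :
    Function.Surjective fun p : Σ M : kMatchings G k, Fin k ≃ M.1 => p.1.enumerate p.2 := by
  classical
  rintro ⟨e, he⟩
  have hinj : Function.Injective fun i => (e i : Sym2 V) := he.injective
  let M : kMatchings G k :=
    ⟨Finset.univ.image fun i => (e i : Sym2 V), by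
      refine ⟨by simp [Finset.card_image_of_injective _ hinj], ?_, ?_⟩
      · simp [Set.subset_def]
      · simp only [Finset.mem_image, Finset.mem_univ, true_and]
        rintro _ ⟨i, rfl⟩ _ ⟨j, rfl⟩ hij
        exact he fun h => hij (by rw [h])⟩
  have hσ : Function.Bijective fun i => (⟨e i, by simp [M]⟩ : M.1) :=
    ⟨fun i j h => hinj congr(($h).1), fun ⟨x, hx⟩ => by simpa [M, Subtype.ext_iff] using hx⟩
  exact ⟨⟨M, Equiv.ofBijective _ hσ⟩, rfl⟩

lemma card_pairwiseVertexDisjoint_edges :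
    Nat.card {e : Fin k → G.edgeSet // PairwiseVertexDisjoint fun i => (e i : Sym2 V)} =
      kMatchingCount G k * k.factorial := by
  rw [← Nat.card_eq_of_bijective _
      ⟨kMatchings.enumerate_injective, kMatchings.enumerate_surjective⟩,
    Nat.card_congr (Equiv.sigmaEquivProdOfEquiv fun M : kMatchings G k =>
      (Equiv.refl _).equivCongr (M.1.equivFinOfCardEq M.2.1)),
    Nat.card_prod, Nat.card_perm, Nat.card_fin, kMatchingCount_eq_card]

end Matchings

theorem card_edgeInjective_trianglePacking_addApex {V : Type*} {G : SimpleGraph V}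
    (hG : G.CliqueFree 3) (k : ℕ) :
    Nat.card {φ : trianglePacking k →g addApex G // EdgeInjective φ} =
      6 ^ k * k.factorial * kMatchingCount G k := by
  let E := (Equiv.piCongrRight fun _ => apexTriangleEquiv hG).trans (trianglePackingHomEquiv _ k)
  calc Nat.card {φ : trianglePacking k →g addApex G // EdgeInjective φ}
      = Nat.card {f : Fin k → G.Dart × Fin 3 // PairwiseVertexDisjoint fun i => (f i).1.edge} :=
        Nat.card_congr <| (E.subtypeEquiv fun f =>
          (edgeInjective_apexTriangles_iff (Prod.fst ∘ f) (Prod.snd ∘ f)).symm).symm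
    _ = Nat.card {q : Fin k → G.Dart // PairwiseVertexDisjoint fun i => (q i).edge} *
          Nat.card (Fin 3) ^ Nat.card (Fin k) :=
        Nat.card_subtype_pi_of_equiv_prod (Equiv.refl (G.Dart × Fin 3))
          fun q : Fin k → G.Dart => PairwiseVertexDisjoint fun i => (q i).edge
    _ = Nat.card {e : Fin k → G.edgeSet // PairwiseVertexDisjoint fun i => (e i : Sym2 V)} *
          Nat.card Bool ^ Nat.card (Fin k) * Nat.card (Fin 3) ^ Nat.card (Fin k) := by
        rw [← Nat.card_subtype_pi_of_equiv_prod (dartEquivEdgeSetProdBool G)]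
        rfl
    _ = 6 ^ k * k.factorial * kMatchingCount G k := by
        rw [card_pairwiseVertexDisjoint_edges]
        simp only [Nat.card_eq_fintype_card, Fintype.card_bool, Fintype.card_fin]
        rw [show 6 = 2 * 3 from rfl, mul_pow]
        ring

theorem edgeInjective_trianglePacking_into_apex_bipartite
    {V : Type*} (G : SimpleGraph V) (c : V → Bool)
    (hc : ∀ u v, G.Adj u v → c u ≠ c v) (k : ℕ) :
    Nat.card {φ : trianglePacking k →g addApex G // EdgeInjective φ} =
      6 ^ k * k.factorial * kMatchingCount G k :=
  card_edgeInjective_trianglePacking_addApex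
    ((Coloring.mk c (hc _ _)).colorable.cliqueFree (by simp)) k
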